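/- arXiv:1706.01563 — 2 statements merged into one kernel-verified Lean document; each statement's English description precedes it below -/
import Mathlib

section
/- Let 0 < γ < 1, N ≥ 1, 1 ≤ n ≤ N, and T_t := Σ_{s=1}^{N} γ^{|s−n|} γ^{|s−t−n|}. Then for all integers t with t ≥ N − n, T_{t+1} = γ·T_t, and for all 0 ≤ t < N − n, T_{t+1} ≤ γ·T_t + γ^{t+1}. -/
open Finset

/-!
Passing from `t` to `t + 1` multiplies the `s`-th summand of `T` by `γ` as long as `s ≤ t + n`.
For `s > t + n` (where `|s - n| = s - n` since `t ≥ 0`) the summand exceeds `γ` times the old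
one by `γ^(t+1) (γ^(2k) - γ^(2k+2))`, `k = s - t - n - 1`, and these excesses telescope along `s`:
`T (t + 1) = γ T t + γ^(t+1) - γ^(t+1+2(N-t-n))`.
-/

theorem Int.sum_Icc_sub_add_one {M : Type*} [AddCommGroup M] (f : ℤ → M) {a b : ℤ}
    (hab : a ≤ b + 1) : ∑ i ∈ Icc a b, (f i - f (i + 1)) = f a - f (b + 1) := by
  have hab' : a - 1 ≤ b := by omega
  induction b, hab' using Int.leInduction with
  | base => simp
  | succ b hb ih =>
    rw [← insert_Icc_right_eq_Icc_add_one (by omega), sum_insert (by simp), ih (by omega)]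
    abel

section Overlap

variable {R : Type*}

def overlapTerm [Monoid R] (γ : R) (n t s : ℤ) : R := γ ^ (s - n).natAbs * γ ^ (s - t - n).natAbs

def tailWeight [Monoid R] (γ : R) (n t s : ℤ) : R := γ ^ ((t + 1).toNat + 2 * (s - t - n - 1).toNat)

variable {γ : R} {n t s : ℤ}

theorem overlapTerm_succ_of_le [CommMonoid R] (hs : s ≤ t + n) :
    overlapTerm γ n (t + 1) s = γ * overlapTerm γ n t s := by
  rw [overlapTerm, overlapTerm, show (s - (t + 1) - n).natAbs = (s - t - n).natAbs + 1 by omega,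
    pow_succ', mul_left_comm]

theorem tailWeight_of_le [Monoid R] (hs : s ≤ t + n + 1) :
    tailWeight γ n t s = γ ^ (t + 1).toNat := by
  rw [tailWeight, show (s - t - n - 1).toNat = 0 by omega, mul_zero, add_zero]

theorem tailWeight_nonneg [Semiring R] [PartialOrder R] [IsOrderedRing R] (hγ : 0 ≤ γ) :
    0 ≤ tailWeight γ n t s :=
  pow_nonneg hγ _

theorem overlapTerm_succ [CommRing R] (ht : 0 ≤ t) :
    overlapTerm γ n (t + 1) s =
      γ * overlapTerm γ n t s + (tailWeight γ n t s - tailWeight γ n t (s + 1)) := by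
  by_cases hs : s ≤ t + n
  · rw [overlapTerm_succ_of_le hs, tailWeight_of_le (by omega), tailWeight_of_le (by omega),
      sub_self, add_zero]
  · obtain ⟨k, hk⟩ : ∃ k : ℕ, s = t + n + 1 + k := ⟨(s - t - n - 1).toNat, by omega⟩
    have h₁ : (s - n).natAbs = (t + 1).toNat + k := by omega
    have h₂ : (s - (t + 1) - n).natAbs = k := by omega
    have h₃ : (s - t - n).natAbs = k + 1 := by omega
    have h₄ : (s - t - n - 1).toNat = k := by omega
    have h₅ : (s + 1 - t - n - 1).toNat = k + 1 := by omega
    simp only [overlapTerm, tailWeight, h₁, h₂, h₃, h₄, h₅]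
    ring

theorem sum_overlapTerm_succ [CommRing R] (ht : 0 ≤ t) {a b : ℤ} (hab : a ≤ b + 1) :
    ∑ s ∈ Icc a b, overlapTerm γ n (t + 1) s =
      γ * ∑ s ∈ Icc a b, overlapTerm γ n t s + (tailWeight γ n t a - tailWeight γ n t (b + 1)) := by
  rw [← Int.sum_Icc_sub_add_one (tailWeight γ n t) hab, mul_sum, ← sum_add_distrib]
  exact sum_congr rfl fun s _ => overlapTerm_succ ht

end Overlap

theorem T_recursion_upper_general (γ : ℝ) (hγ0 : 0 < γ)
    (N n : ℤ) (hn1 : 1 ≤ n)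
    (T : ℤ → ℝ)
    (hT : ∀ t : ℤ, T t = ∑ s ∈ Finset.Icc (1 : ℤ) N, γ ^ (s - n).natAbs * γ ^ (s - t - n).natAbs) :
    (∀ t : ℤ, N - n ≤ t → T (t + 1) = γ * T t) ∧
    (∀ t : ℤ, 0 ≤ t → t < N - n → T (t + 1) ≤ γ * T t + γ ^ (t + 1).toNat) := by
  have hT' : ∀ t, T t = ∑ s ∈ Icc 1 N, overlapTerm γ n t s := hT
  refine ⟨fun t ht => ?_, fun t ht0 htN => ?_⟩
  · rw [hT', hT', mul_sum]
    exact sum_congr rfl fun s hs => overlapTerm_succ_of_le (by grind)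
  · rw [hT', hT', sum_overlapTerm_succ ht0 (by omega), tailWeight_of_le (by omega)]
    linarith [(tailWeight_nonneg hγ0.le : 0 ≤ tailWeight γ n t (N + 1))]

/-- Recursions for `T_t := Σ_{s=1}^{N} γ^{|s−n|} γ^{|s−t−n|}`: for `t ≥ N − n`,
`T_{t+1} = γ·T_t`, and for `0 ≤ t < N − n`, `T_{t+1} ≤ γ·T_t + γ^{t+1}`. -/
theorem T_recursion_upper (γ : ℝ) (hγ0 : 0 < γ) (hγ1 : γ < 1)
    (N n : ℤ) (hN : 1 ≤ N) (hn1 : 1 ≤ n) (hnN : n ≤ N)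
    (T : ℤ → ℝ)
    (hT : ∀ t : ℤ, T t = ∑ s ∈ Finset.Icc (1 : ℤ) N, γ ^ (s - n).natAbs * γ ^ (s - t - n).natAbs) :
    (∀ t : ℤ, N - n ≤ t → T (t + 1) = γ * T t) ∧
    (∀ t : ℤ, 0 ≤ t → t < N - n → T (t + 1) ≤ γ * T t + γ ^ (t + 1).toNat) :=
  T_recursion_upper_general γ hγ0 N n hn1 T hT
end

section
/- Let 0 < α, γ < 1, N ≥ 1, 1 ≤ n ≤ N, T_t := Σ_{s=1}^{N} γ^{|s−n|} γ^{|s−t−n|}, and T_0 as above. Then Σ_{t=0}^{N−1} α^t T_t ≤ ((1 − (αγ)^N)/(1 − αγ))·T_0 + γ/(1−γ)². -/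
open Finset

/-- Upper bound `Σ_{t=0}^{N−1} α^t T_t ≤ ((1 − (αγ)^N)/(1 − αγ))·T_0 + γ/(1−γ)²`,
where `T_t := Σ_{s=1}^{N} γ^{|s−n|} γ^{|s−t−n|}`. -/
theorem sum_alpha_T_upper (α γ : ℝ) (hα0 : 0 < α) (hα1 : α < 1)
    (hγ0 : 0 < γ) (hγ1 : γ < 1)
    (N : ℕ) (hN : 1 ≤ N) (n : ℤ) (hn1 : 1 ≤ n) (hnN : n ≤ (N : ℤ))
    (T : ℤ → ℝ)
    (hT : ∀ t : ℤ, T t =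
      ∑ s ∈ Finset.Icc (1 : ℤ) (N : ℤ), γ ^ (s - n).natAbs * γ ^ (s - t - n).natAbs) :
    (∑ t ∈ Finset.range N, α ^ t * T (t : ℤ)) ≤
      ((1 - (α * γ) ^ N) / (1 - α * γ)) * T 0 + γ / (1 - γ) ^ 2 := by
  have hγ0' : (0:ℝ) ≤ γ := hγ0.le
  set g : ℤ → ℝ := fun s => γ ^ (s - n).natAbs * γ ^ (s - n).natAbs with hg
  have hgnn : ∀ s, 0 ≤ g s := fun s => mul_nonneg (pow_nonneg hγ0' _) (pow_nonneg hγ0' _)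
  have hIcc : Finset.Icc (1:ℤ) (N:ℤ) = Finset.Ioc (0:ℤ) (N:ℤ) := by
    ext x; simp [Int.lt_iff_add_one_le]
  have hT0 : T 0 = ∑ s ∈ Finset.Ioc (0:ℤ) (N:ℤ), g s := by
    rw [hT 0, hIcc]
    exact Finset.sum_congr rfl fun s _ => by norm_num [hg]
  have hT0nn : 0 ≤ T 0 := by
    rw [hT0]; exact Finset.sum_nonneg fun s _ => hgnn s
  -- key pointwise bound
  have key : ∀ t : ℕ, T (t : ℤ) ≤ γ ^ t * T 0 + t * γ ^ t := by
    intro t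
    rw [hT t, hIcc, hT0]
    set m : ℤ := min (n + t) N with hm
    have h0n : (0:ℤ) ≤ n := by omega
    have hnm : n ≤ m := le_min (by omega) hnN
    have hmN : m ≤ N := min_le_right _ _
    have hsplit1 : Finset.Ioc (0:ℤ) (N:ℤ) = Finset.Ioc 0 n ∪ Finset.Ioc n (N:ℤ) :=
      (Finset.Ioc_union_Ioc_eq_Ioc h0n hnN).symm
    have hsplit2 : Finset.Ioc n (N:ℤ) = Finset.Ioc n m ∪ Finset.Ioc m (N:ℤ) :=
      (Finset.Ioc_union_Ioc_eq_Ioc hnm hmN).symm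
    have hdisj : ∀ a b c : ℤ, Disjoint (Finset.Ioc a b) (Finset.Ioc b c) := by
      intro a b c
      rw [Finset.disjoint_left]
      intro x hx hx'
      rw [Finset.mem_Ioc] at hx hx'
      omega
    have hsum : ∑ s ∈ Finset.Ioc (0:ℤ) (N:ℤ), γ ^ (s - n).natAbs * γ ^ (s - (t:ℤ) - n).natAbs
        = ∑ s ∈ Finset.Ioc (0:ℤ) n, γ ^ (s - n).natAbs * γ ^ (s - (t:ℤ) - n).natAbs
          + ∑ s ∈ Finset.Ioc n m, γ ^ (s - n).natAbs * γ ^ (s - (t:ℤ) - n).natAbs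
          + ∑ s ∈ Finset.Ioc m (N:ℤ), γ ^ (s - n).natAbs * γ ^ (s - (t:ℤ) - n).natAbs := by
      rw [hsplit1, Finset.sum_union (hdisj 0 n N), hsplit2, Finset.sum_union (hdisj n m N)]
      ring
    rw [hsum]
    have hS1 : ∑ s ∈ Finset.Ioc (0:ℤ) n, γ ^ (s - n).natAbs * γ ^ (s - (t:ℤ) - n).natAbs
        = γ ^ t * ∑ s ∈ Finset.Ioc (0:ℤ) n, g s := by
      rw [Finset.mul_sum]
      refine Finset.sum_congr rfl fun s hs => ?_
      have hsn : s ≤ n := (Finset.mem_Ioc.mp hs).2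
      have habs : (s - (t:ℤ) - n).natAbs = (s - n).natAbs + t := by omega
      rw [habs, pow_add, hg]; ring
    have hS2 : ∑ s ∈ Finset.Ioc n m, γ ^ (s - n).natAbs * γ ^ (s - (t:ℤ) - n).natAbs
        ≤ t * γ ^ t := by
      have hconst : ∀ s ∈ Finset.Ioc n m, γ ^ (s - n).natAbs * γ ^ (s - (t:ℤ) - n).natAbs
          = γ ^ t := by
        intro s hs
        obtain ⟨h1, h2⟩ := Finset.mem_Ioc.mp hs
        have h3 : s ≤ n + t := h2.trans (min_le_left _ _)
        have habs : (s - n).natAbs + (s - (t:ℤ) - n).natAbs = t := by omega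
        rw [← pow_add, habs]
      rw [Finset.sum_congr rfl hconst, Finset.sum_const, nsmul_eq_mul, Int.card_Ioc]
      have hcard : ((m - n).toNat : ℝ) ≤ (t : ℝ) := by
        have : (m - n).toNat ≤ t := by omega
        exact_mod_cast this
      exact mul_le_mul_of_nonneg_right hcard (pow_nonneg hγ0' _)
    by_cases hcase : n + (t:ℤ) ≤ N
    · have hmeq : m = n + t := min_eq_left hcase
      have hS3 : ∑ s ∈ Finset.Ioc m (N:ℤ), γ ^ (s - n).natAbs * γ ^ (s - (t:ℤ) - n).natAbs
          = γ ^ t * ∑ s ∈ Finset.Ioc n ((N:ℤ) - t), g s := by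
        have hmap : (Finset.Ioc n ((N:ℤ) - t)).map (addRightEmbedding (t:ℤ))
            = Finset.Ioc m (N:ℤ) := by
          rw [Finset.map_add_right_Ioc, hmeq]; congr 1; ring
        rw [← hmap, Finset.sum_map, Finset.mul_sum]
        refine Finset.sum_congr rfl fun s hs => ?_
        obtain ⟨h1, h2⟩ := Finset.mem_Ioc.mp hs
        simp only [addRightEmbedding_apply]
        have habs1 : (s + (t:ℤ) - n).natAbs = (s - n).natAbs + t := by omega
        have habs2 : (s + (t:ℤ) - (t:ℤ) - n).natAbs = (s - n).natAbs := by omega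
        rw [habs1, habs2, pow_add, hg]; ring
      rw [hS1, hS3]
      have hsub : ∑ s ∈ Finset.Ioc (0:ℤ) n, g s + ∑ s ∈ Finset.Ioc n ((N:ℤ) - t), g s
          ≤ ∑ s ∈ Finset.Ioc (0:ℤ) (N:ℤ), g s := by
        rw [← Finset.sum_union (hdisj 0 n ((N:ℤ) - t)),
          Finset.Ioc_union_Ioc_eq_Ioc h0n (by omega)]
        exact Finset.sum_le_sum_of_subset_of_nonneg
          (Finset.Ioc_subset_Ioc_right (by omega)) (fun s _ _ => hgnn s)
      have hmul := mul_le_mul_of_nonneg_left hsub (pow_nonneg hγ0' t)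
      rw [mul_add] at hmul
      linarith
    · have hmeq : m = N := min_eq_right (by omega)
      have hS3 : ∑ s ∈ Finset.Ioc m (N:ℤ), γ ^ (s - n).natAbs * γ ^ (s - (t:ℤ) - n).natAbs
          = 0 := by
        rw [hmeq]; simp
      rw [hS1, hS3]
      have hsub : ∑ s ∈ Finset.Ioc (0:ℤ) n, g s ≤ ∑ s ∈ Finset.Ioc (0:ℤ) (N:ℤ), g s :=
        Finset.sum_le_sum_of_subset_of_nonneg
          (Finset.Ioc_subset_Ioc_right hnN) (fun s _ _ => hgnn s)
      have := mul_le_mul_of_nonneg_left hsub (pow_nonneg hγ0' t)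
      have ht : (0:ℝ) ≤ t * γ ^ t := mul_nonneg (Nat.cast_nonneg t) (pow_nonneg hγ0' _)
      linarith
  -- assemble
  have hαγ : α * γ < 1 := by nlinarith
  have hαγ0 : 0 < α * γ := mul_pos hα0 hγ0
  have step1 : (∑ t ∈ Finset.range N, α ^ t * T (t : ℤ))
      ≤ ∑ t ∈ Finset.range N, ((α * γ) ^ t * T 0 + t * (α * γ) ^ t) := by
    refine Finset.sum_le_sum fun t _ => ?_
    have h1 := key t
    have h2 : α ^ t * T (t:ℤ) ≤ α ^ t * (γ ^ t * T 0 + t * γ ^ t) :=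
      mul_le_mul_of_nonneg_left h1 (pow_nonneg hα0.le t)
    calc α ^ t * T (t:ℤ) ≤ α ^ t * (γ ^ t * T 0 + t * γ ^ t) := h2
      _ = (α * γ) ^ t * T 0 + t * (α * γ) ^ t := by rw [mul_pow]; ring
  have step2 : ∑ t ∈ Finset.range N, ((α * γ) ^ t * T 0 + t * (α * γ) ^ t)
      = (∑ t ∈ Finset.range N, (α * γ) ^ t) * T 0
        + ∑ t ∈ Finset.range N, (t : ℝ) * (α * γ) ^ t := by
    rw [Finset.sum_add_distrib, Finset.sum_mul]
  have hgeom : ∑ t ∈ Finset.range N, (α * γ) ^ t = (1 - (α * γ) ^ N) / (1 - α * γ) := by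
    rw [geom_sum_eq (by nlinarith : α * γ ≠ 1), ← neg_div_neg_eq, neg_sub, neg_sub]
  have htail : ∑ t ∈ Finset.range N, (t : ℝ) * (α * γ) ^ t ≤ γ / (1 - γ) ^ 2 := by
    have hle : ∀ t : ℕ, (t : ℝ) * (α * γ) ^ t ≤ t * γ ^ t := by
      intro t
      refine mul_le_mul_of_nonneg_left ?_ (Nat.cast_nonneg t)
      exact pow_le_pow_left₀ hαγ0.le (by nlinarith) t
    calc ∑ t ∈ Finset.range N, (t : ℝ) * (α * γ) ^ t
        ≤ ∑ t ∈ Finset.range N, (t : ℝ) * γ ^ t := Finset.sum_le_sum fun t _ => hle t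
      _ ≤ ∑' t : ℕ, (t : ℝ) * γ ^ t := by
          refine Summable.sum_le_tsum _ (fun t _ => mul_nonneg (Nat.cast_nonneg t) (pow_nonneg hγ0' t)) ?_
          exact (hasSum_coe_mul_geometric_of_norm_lt_one
            (by rw [Real.norm_eq_abs]; rw [abs_of_pos hγ0]; exact hγ1)).summable
      _ = γ / (1 - γ) ^ 2 := tsum_coe_mul_geometric_of_norm_lt_one
            (by rw [Real.norm_eq_abs, abs_of_pos hγ0]; exact hγ1)
  calc (∑ t ∈ Finset.range N, α ^ t * T (t : ℤ))
      ≤ (∑ t ∈ Finset.range N, (α * γ) ^ t) * T 0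
        + ∑ t ∈ Finset.range N, (t : ℝ) * (α * γ) ^ t := by rw [← step2]; exact step1
    _ ≤ ((1 - (α * γ) ^ N) / (1 - α * γ)) * T 0 + γ / (1 - γ) ^ 2 := by
        rw [hgeom]; linarith [htail]
end
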